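/- arXiv:2503.21361 — 5 statements merged into one kernel-verified Lean document; each statement's English description precedes it below -/
import Mathlib

section
/- Let a ≠ 0 and b be real numbers, and let s be as in the one-step-size setup, with s'(τ) = (a + bτ − aτ²)/(1+τ²)². Then the unique global maximizer of s over ℝ is τ* = sign(a)·( b/(2|a|) + √(b²/(4a²) + 1) ). -/
open RealInnerProductSpace

/-- For the one-step-size objective `s(τ) = ⟨u + τw, M(v + τx)⟩/(1 + τ²)` with
`a ≠ 0`, the unique global maximizer over `ℝ` is
`τ* = sign(a)·(b/(2|a|) + √(b²/(4a²) + 1))`. -/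
theorem stmt_4 (d m : ℕ)
    (M : EuclideanSpace ℝ (Fin d) →L[ℝ] EuclideanSpace ℝ (Fin m))
    (u w : EuclideanSpace ℝ (Fin m)) (v x : EuclideanSpace ℝ (Fin d))
    (hu : ‖u‖ = 1) (hw : ‖w‖ = 1) (hv : ‖v‖ = 1) (hx : ‖x‖ = 1)
    (hwu : ⟪w, u⟫ = 0) (hxv : ⟪x, v⟫ = 0)
    (a b : ℝ)
    (ha : a = ⟪u, M x⟫ + ⟪w, M v⟫)
    (hb : b = 2 * (⟪w, M x⟫ - ⟪u, M v⟫))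
    (ha0 : a ≠ 0)
    (s : ℝ → ℝ)
    (hs : ∀ τ, s τ = ⟪u + τ • w, M (v + τ • x)⟫ / (1 + τ ^ 2))
    (τstar : ℝ)
    (hτ : τstar = Real.sign a * (b / (2 * |a|) + Real.sqrt (b ^ 2 / (4 * a ^ 2) + 1))) :
    ∀ τ : ℝ, τ ≠ τstar → s τ < s τstar := by
  set c : ℝ := ⟪u, M v⟫ with hc
  set e : ℝ := ⟪w, M x⟫ with he
  have hs' : ∀ τ : ℝ, s τ = (c + a * τ + e * τ ^ 2) / (1 + τ ^ 2) := by
    intro τ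
    rw [hs τ, ha]
    congr 1
    simp only [map_add, map_smul, inner_add_left, inner_add_right,
      real_inner_smul_left, real_inner_smul_right]
    ring
  set q : ℝ := Real.sqrt (b ^ 2 + 4 * a ^ 2) with hqdef
  have hpos : (0:ℝ) < b ^ 2 + 4 * a ^ 2 := by positivity
  have hq2 : q ^ 2 = b ^ 2 + 4 * a ^ 2 := Real.sq_sqrt hpos.le
  have hqpos : 0 < q := Real.sqrt_pos.mpr hpos
  have h4 : Real.sqrt (b ^ 2 / (4 * a ^ 2) + 1) = q / (2 * |a|) := by
    have hrw : b ^ 2 / (4 * a ^ 2) + 1 = (b ^ 2 + 4 * a ^ 2) / (4 * a ^ 2) := by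
      field_simp
    rw [hrw, Real.sqrt_div (by positivity), hqdef]
    congr 1
    rw [show (4 : ℝ) * a ^ 2 = (2 * a) ^ 2 by ring, Real.sqrt_sq_eq_abs, abs_mul]
    norm_num
  have h1 : 2 * a * τstar = b + q := by
    rcases ha0.lt_or_gt with hlt | hgt
    · rw [hτ, h4, Real.sign_of_neg hlt, abs_of_neg hlt]
      field_simp
      ring
    · rw [hτ, h4, Real.sign_of_pos hgt, abs_of_pos hgt]
      field_simp
  intro τ hne
  rw [hs' τ, hs' τstar, div_lt_div_iff₀ (by positivity) (by positivity)]
  have hce : c = e - b / 2 := by linarith [hb]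
  have hsq : 0 < (τ - τstar) ^ 2 :=
    (sq_nonneg (τ - τstar)).lt_of_ne (Ne.symm (pow_ne_zero 2 (sub_ne_zero.mpr hne)))
  have hid : (c + a * τstar + e * τstar ^ 2) * (1 + τ ^ 2)
      - (c + a * τ + e * τ ^ 2) * (1 + τstar ^ 2) = q / 2 * (τ - τstar) ^ 2 := by
    have h2 : (q - b) * τstar = 2 * a := by
      apply mul_left_cancel₀ ha0
      linear_combination ((q - b) / 2) * h1 + hq2 / 2
    rw [hce]
    linear_combination (τ - τstar) * τ / 2 * h1 + (τ - τstar) / 2 * h2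
  nlinarith [mul_pos hqpos hsq]
end

section
/- Let u, w ∈ ℝ^m and v, x ∈ ℝ^d be unit vectors with w ⊥ u and x ⊥ v, let M be a linear map, and set a = ⟨u, Mx⟩ + ⟨w, Mv⟩, b = 2(⟨w, Mx⟩ − ⟨u, Mv⟩). If τ satisfies aτ² − bτ − a = 0, then ⟨(u + τw)/√(1+τ²), M(v + τx)/√(1+τ²)⟩ − ⟨u, Mv⟩ = (τ·a)/2. -/
open RealInnerProductSpace

/-! The rotated pair is the unit-normalisation of `(u + τw, v + τx)`; expanding the bilinear form
`⟪·, M ·⟫` gives a quadratic in `τ` divided by `1 + τ²`, and the equation `aτ² − bτ − a = 0` for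
the critical step size is exactly what collapses this quotient to `τa/2`. -/

section

variable {E F : Type*} [NormedAddCommGroup E] [InnerProductSpace ℝ E]
  [NormedAddCommGroup F] [InnerProductSpace ℝ F] {G : Type*} [FunLike G E F]
  [LinearMapClass G ℝ E F]

theorem inner_smul_map_smul (M : G) (c : ℝ) (y : F) (z : E) :
    ⟪c • y, M (c • z)⟫ = c ^ 2 * ⟪y, M z⟫ := by
  rw [map_smul, real_inner_smul_left, real_inner_smul_right]
  ring

theorem inner_add_smul_map_add_smul (M : G) (u w : F) (v x : E) (τ : ℝ) :
    ⟪u + τ • w, M (v + τ • x)⟫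
      = ⟪u, M v⟫ + τ * (⟪u, M x⟫ + ⟪w, M v⟫) + τ ^ 2 * ⟪w, M x⟫ := by
  simp only [map_add, map_smul, inner_add_left, inner_add_right, real_inner_smul_left,
    real_inner_smul_right]
  ring

end

theorem div_one_add_sq_sub_eq_of_quadratic {p a t τ : ℝ}
    (hτ : a * τ ^ 2 - 2 * (t - p) * τ - a = 0) :
    (p + τ * a + τ ^ 2 * t) / (1 + τ ^ 2) - p = τ * a / 2 := by
  have hpos : 0 < 1 + τ ^ 2 := by positivity
  field_simp
  linear_combination (-τ) * hτ

theorem stmt_5_general (d m : ℕ)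
    (M : EuclideanSpace ℝ (Fin d) →L[ℝ] EuclideanSpace ℝ (Fin m))
    (u w : EuclideanSpace ℝ (Fin m)) (v x : EuclideanSpace ℝ (Fin d))
    (a b : ℝ)
    (ha : a = ⟪u, M x⟫ + ⟪w, M v⟫)
    (hb : b = 2 * (⟪w, M x⟫ - ⟪u, M v⟫))
    (τ : ℝ) (hτ : a * τ ^ 2 - b * τ - a = 0) :
    ⟪(Real.sqrt (1 + τ ^ 2))⁻¹ • (u + τ • w),
        M ((Real.sqrt (1 + τ ^ 2))⁻¹ • (v + τ • x))⟫ - ⟪u, M v⟫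
      = τ * a / 2 := by
  have hscale : (Real.sqrt (1 + τ ^ 2))⁻¹ ^ 2 = (1 + τ ^ 2)⁻¹ := by
    rw [inv_pow, Real.sq_sqrt (by positivity)]
  rw [inner_smul_map_smul M, hscale, inv_mul_eq_div,
    inner_add_smul_map_add_smul M, ← ha]
  rw [hb] at hτ
  exact div_one_add_sq_sub_eq_of_quadratic hτ

/-- Ascent identity for the optimal joint step size: if `aτ² − bτ − a = 0` then
`⟨(u + τw)/√(1+τ²), M(v + τx)/√(1+τ²)⟩ − ⟨u, Mv⟩ = τa/2`. -/
theorem stmt_5 (d m : ℕ)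
    (M : EuclideanSpace ℝ (Fin d) →L[ℝ] EuclideanSpace ℝ (Fin m))
    (u w : EuclideanSpace ℝ (Fin m)) (v x : EuclideanSpace ℝ (Fin d))
    (hu : ‖u‖ = 1) (hw : ‖w‖ = 1) (hv : ‖v‖ = 1) (hx : ‖x‖ = 1)
    (hwu : ⟪w, u⟫ = 0) (hxv : ⟪x, v⟫ = 0)
    (a b : ℝ)
    (ha : a = ⟪u, M x⟫ + ⟪w, M v⟫)
    (hb : b = 2 * (⟪w, M x⟫ - ⟪u, M v⟫))
    (τ : ℝ) (hτ : a * τ ^ 2 - b * τ - a = 0) :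
    ⟪(Real.sqrt (1 + τ ^ 2))⁻¹ • (u + τ • w),
        M ((Real.sqrt (1 + τ ^ 2))⁻¹ • (v + τ • x))⟫ - ⟪u, M v⟫
      = τ * a / 2 :=
  stmt_5_general d m M u w v x a b ha hb τ hτ
end

section
/- Let a, b, c, d ∈ ℝ and suppose (τ, ξ) satisfies both b + ξd = τ(a + ξc) and c + τd = ξ(a + τb). Then q(τ, ξ)² = (a + τb)(a + ξc), where q(τ, ξ) = (a + bτ + cξ + dτξ)/(√(1+τ²)√(1+ξ²)). -/
/-- Product representation of the squared objective at a critical point of the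
two-step-size optimization: if `b + ξd = τ(a + ξc)` and `c + τd = ξ(a + τb)`,
then `q(τ,ξ)² = (a + τb)(a + ξc)`. -/
theorem stmt_12 (a b c d : ℝ)
    (q : ℝ → ℝ → ℝ)
    (hq : ∀ τ ξ, q τ ξ =
      (a + b * τ + c * ξ + d * τ * ξ) /
        (Real.sqrt (1 + τ ^ 2) * Real.sqrt (1 + ξ ^ 2)))
    (τ ξ : ℝ)
    (h1 : b + ξ * d = τ * (a + ξ * c))
    (h2 : c + τ * d = ξ * (a + τ * b)) :
    (q τ ξ) ^ 2 = (a + τ * b) * (a + ξ * c) := by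
  have hτ : (0:ℝ) < 1 + τ ^ 2 := by positivity
  have hξ : (0:ℝ) < 1 + ξ ^ 2 := by positivity
  have hN1 : a + b * τ + c * ξ + d * τ * ξ = (a + ξ * c) * (1 + τ ^ 2) := by
    linear_combination τ * h1
  have hN2 : a + b * τ + c * ξ + d * τ * ξ = (a + τ * b) * (1 + ξ ^ 2) := by
    linear_combination ξ * h2
  rw [hq, div_pow, mul_pow, Real.sq_sqrt hτ.le, Real.sq_sqrt hξ.le]
  rw [div_eq_iff (by positivity)]
  calc (a + b * τ + c * ξ + d * τ * ξ) ^ 2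
      = ((a + τ * b) * (1 + ξ ^ 2)) * ((a + ξ * c) * (1 + τ ^ 2)) := by
        rw [← hN1, ← hN2]; ring
    _ = (a + τ * b) * (a + ξ * c) * ((1 + τ ^ 2) * (1 + ξ ^ 2)) := by ring
end

section
/- Let a, b, c, d ∈ ℝ with a + τb ≠ 0, τ = (b + ξd)/(a + ξc), and ξ = (c + τd)/(a + τb). Then the ascent identity holds: q(τ, ξ)² − a² = c² + τ(ab + cd) = b² + ξ(ac + bd), where q(τ, ξ) = (a + bτ + cξ + dτξ)/(√(1+τ²)√(1+ξ²)). -/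
/-- Ascent identity for the pair of optimal step sizes:
`q(τ,ξ)² − a² = c² + τ(ab + cd) = b² + ξ(ac + bd)`. -/
theorem stmt_13 (a b c d : ℝ)
    (q : ℝ → ℝ → ℝ)
    (hq : ∀ τ ξ, q τ ξ =
      (a + b * τ + c * ξ + d * τ * ξ) /
        (Real.sqrt (1 + τ ^ 2) * Real.sqrt (1 + ξ ^ 2)))
    (τ ξ : ℝ)
    (hab : a + τ * b ≠ 0)
    (hτ : τ = (b + ξ * d) / (a + ξ * c))
    (hξ : ξ = (c + τ * d) / (a + τ * b)) :
    (q τ ξ) ^ 2 - a ^ 2 = c ^ 2 + τ * (a * b + c * d) ∧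
    (q τ ξ) ^ 2 - a ^ 2 = b ^ 2 + ξ * (a * c + b * d) := by
  have h1 : ξ * (a + τ * b) = c + τ * d := by
    rw [hξ]; field_simp
  have hac : a + ξ * c ≠ 0 := by
    intro h0
    have hτ0 : τ = 0 := by rw [hτ, h0, div_zero]
    subst hτ0
    have ha : a ≠ 0 := by simpa using hab
    have hξ' : ξ = c / a := by simpa using hξ
    rw [hξ'] at h0
    field_simp at h0
    exact ha (by nlinarith [sq_nonneg a, sq_nonneg c, sq_nonneg (a - c), sq_nonneg (a + c)])
  have h2 : τ * (a + ξ * c) = b + ξ * d := by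
    rw [hτ]; field_simp
  have hN1 : a + b * τ + c * ξ + d * τ * ξ = (a + τ * b) * (1 + ξ ^ 2) := by
    linear_combination (-ξ) * h1
  have hN2 : a + b * τ + c * ξ + d * τ * ξ = (a + ξ * c) * (1 + τ ^ 2) := by
    linear_combination (-τ) * h2
  have hkey : q τ ξ ^ 2 = (a + τ * b) * (a + ξ * c) := by
    rw [hq, div_pow, mul_pow, Real.sq_sqrt (by positivity), Real.sq_sqrt (by positivity),
      div_eq_iff (by positivity)]
    linear_combination (a + b * τ + c * ξ + d * τ * ξ) * hN2 + (a + ξ * c) * (1 + τ ^ 2) * hN1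
  constructor
  · rw [hkey]; linear_combination c * h1
  · rw [hkey]; linear_combination b * h2
end

section
/- Let M : ℝ^d → ℝ^m be linear, u ∈ ℝ^m, v ∈ ℝ^d unit vectors with Mv ≠ 0 and M*u ≠ 0, and set a = ⟨u, Mv⟩ and λ = ‖M*u‖·‖Mv‖. Then 0 ≤ λ − a² holds whenever a² = ⟨u, Mv/‖Mv‖⟩·⟨v, M*u/‖M*u‖⟩·λ ≥ 0, and moreover λ − a² ≤ ‖M‖²·( ‖Mv/‖Mv‖ − u‖² + ‖M*u/‖M*u‖ − v‖² ). -/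
open RealInnerProductSpace

set_option maxHeartbeats 1000000 in
/-- From the proof of Corollary `conv_rate_a_k`: with `a = ⟨u, Mv⟩`,
`λ = ‖M*u‖·‖Mv‖`, if `a² = ⟨u, Mv/‖Mv‖⟩·⟨v, M*u/‖M*u‖⟩·λ ≥ 0` then
`0 ≤ λ − a²` and `λ − a² ≤ ‖M‖²(‖Mv/‖Mv‖ − u‖² + ‖M*u/‖M*u‖ − v‖²)`. -/
theorem stmt_17 (d m : ℕ)
    (M : EuclideanSpace ℝ (Fin d) →L[ℝ] EuclideanSpace ℝ (Fin m))
    (u : EuclideanSpace ℝ (Fin m)) (v : EuclideanSpace ℝ (Fin d))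
    (hu : ‖u‖ = 1) (hv : ‖v‖ = 1)
    (hMv : M v ≠ 0) (hMu : ContinuousLinearMap.adjoint M u ≠ 0)
    (a lam : ℝ)
    (ha : a = ⟪u, M v⟫)
    (hlam : lam = ‖ContinuousLinearMap.adjoint M u‖ * ‖M v‖)
    (hfac : a ^ 2 =
      ⟪u, ‖M v‖⁻¹ • M v⟫ *
        ⟪v, ‖ContinuousLinearMap.adjoint M u‖⁻¹ • ContinuousLinearMap.adjoint M u⟫ * lam)
    (hpos : 0 ≤
      ⟪u, ‖M v‖⁻¹ • M v⟫ *
        ⟪v, ‖ContinuousLinearMap.adjoint M u‖⁻¹ • ContinuousLinearMap.adjoint M u⟫ * lam) :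
    0 ≤ lam - a ^ 2 ∧
    lam - a ^ 2 ≤ ‖M‖ ^ 2 *
      (‖‖M v‖⁻¹ • M v - u‖ ^ 2 +
       ‖‖ContinuousLinearMap.adjoint M u‖⁻¹ • ContinuousLinearMap.adjoint M u - v‖ ^ 2) := by
  set A := ContinuousLinearMap.adjoint M u with hA
  set x := ‖M v‖⁻¹ • M v with hx
  set y := ‖A‖⁻¹ • A with hy
  have hMvn : ‖M v‖ ≠ 0 := norm_ne_zero_iff.mpr hMv
  have hAn : ‖A‖ ≠ 0 := norm_ne_zero_iff.mpr hMu
  have hnx : ‖x‖ = 1 := by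
    rw [hx, norm_smul, norm_inv, norm_norm, inv_mul_cancel₀ hMvn]
  have hny : ‖y‖ = 1 := by
    rw [hy, norm_smul, norm_inv, norm_norm, inv_mul_cancel₀ hAn]
  set c₁ := ⟪u, x⟫ with hc1def
  set c₂ := ⟪v, y⟫ with hc2def
  have hc1 : |c₁| ≤ 1 := by
    calc |c₁| ≤ ‖u‖ * ‖x‖ := abs_real_inner_le_norm u x
    _ = 1 := by rw [hu, hnx, one_mul]
  have hc2 : |c₂| ≤ 1 := by
    calc |c₂| ≤ ‖v‖ * ‖y‖ := abs_real_inner_le_norm v y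
    _ = 1 := by rw [hv, hny, one_mul]
  have hc1' := abs_le.mp hc1
  have hc2' := abs_le.mp hc2
  have hlam0 : 0 ≤ lam := by
    rw [hlam]; positivity
  have hlamle : lam ≤ ‖M‖ ^ 2 := by
    have h1 : ‖A‖ ≤ ‖M‖ := by
      calc ‖A‖ ≤ ‖ContinuousLinearMap.adjoint M‖ * ‖u‖ :=
        ContinuousLinearMap.le_opNorm _ u
      _ = ‖M‖ := by rw [hu, mul_one]; exact ContinuousLinearMap.adjoint.norm_map M
    have h2 : ‖M v‖ ≤ ‖M‖ := by
      calc ‖M v‖ ≤ ‖M‖ * ‖v‖ := ContinuousLinearMap.le_opNorm _ v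
      _ = ‖M‖ := by rw [hv, mul_one]
    have h0 : (0:ℝ) ≤ ‖M v‖ := norm_nonneg _
    have h0' : (0:ℝ) ≤ ‖A‖ := norm_nonneg _
    rw [hlam]; nlinarith
  have hsq1 : ‖x - u‖ ^ 2 = 2 - 2 * c₁ := by
    rw [@norm_sub_sq_real, hnx, hu]
    have h := real_inner_comm u x
    linarith [h]
  have hsq2 : ‖y - v‖ ^ 2 = 2 - 2 * c₂ := by
    rw [@norm_sub_sq_real, hny, hv]
    have h := real_inner_comm v y
    linarith [h]
  clear_value A x y c₁ c₂
  have hcc : c₁ * c₂ ≤ 1 := by nlinarith [hc1'.1, hc1'.2, hc2'.1, hc2'.2]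
  have hccnn : (0:ℝ) ≤ 1 - c₁ * c₂ := by linarith
  constructor
  · have h0 : 0 ≤ lam * (1 - c₁ * c₂) := mul_nonneg hlam0 hccnn
    have heq : lam * (1 - c₁ * c₂) = lam - c₁ * c₂ * lam := by ring
    linarith [hfac]
  · rw [hsq1, hsq2]
    have hstep : (1:ℝ) - c₁ * c₂ ≤ (2 - 2 * c₁) + (2 - 2 * c₂) := by
      nlinarith [mul_nonneg (sub_nonneg.mpr hc1'.2) (sub_nonneg.mpr hc2'.2),
        hc1'.2, hc2'.2]
    have h1 : lam * (1 - c₁ * c₂) ≤ lam * ((2 - 2 * c₁) + (2 - 2 * c₂)) :=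
      mul_le_mul_of_nonneg_left hstep hlam0
    have hq : (0:ℝ) ≤ (2 - 2 * c₁) + (2 - 2 * c₂) := by linarith [hc1'.2, hc2'.2]
    have h2 : lam * ((2 - 2 * c₁) + (2 - 2 * c₂)) ≤
        ‖M‖ ^ 2 * ((2 - 2 * c₁) + (2 - 2 * c₂)) :=
      mul_le_mul_of_nonneg_right hlamle hq
    have heq : lam * (1 - c₁ * c₂) = lam - c₁ * c₂ * lam := by ring
    linarith [hfac]
end
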